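/- arXiv:1606.08904 — 4 statements merged into one kernel-verified Lean document; each statement's English description precedes it below -/
import Mathlib

section
/- For any two square row-stochastic matrices Q1 and Q2 of the same size, the ergodic coefficient delta of their product satisfies delta(Q1*Q2) <= lambda(Q1) * lambda(Q2), where delta(A) = max over columns j and row pairs (i1,i2) of |A_{i1 j} - A_{i2 j}| and lambda(A) = 1 - min over row pairs (i1,i2) of sum_j min(A_{i1 j}, A_{i2 j}). -/
/-!
Write `d k = Q₁ i₁ k - Q₁ i₂ k` and `v k = Q₂ k j`, so that
`(Q₁ Q₂) i₁ j - (Q₁ Q₂) i₂ j = ∑ d k v k`. Since `∑ d = 0`, the column `v` may be shifted by its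
minimum, after which `∑ d k v k ≤ (∑ (d k)⁺) (max v - min v)`. For stochastic rows,
`∑ (d k)⁺ = 1 - ∑ min (Q₁ i₁ k) (Q₁ i₂ k) ≤ λ(Q₁)`, and every column difference
`max v - min v` of `Q₂` is itself bounded by `λ(Q₂)`.
-/

open Finset Matrix

/-- The ergodicity coefficient `delta`: the maximum over columns `j` and row pairs
`(i1, i2)` of `|A i1 j - A i2 j|`. -/
noncomputable def ergDelta {m : ℕ} (A : Matrix (Fin m) (Fin m) ℝ) : ℝ :=
  ⨆ j, ⨆ i1, ⨆ i2, |A i1 j - A i2 j|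

/-- The ergodicity coefficient `lambda`:
`1 - min over row pairs (i1,i2) of sum_j min (A i1 j) (A i2 j)`. -/
noncomputable def ergLambda {m : ℕ} (A : Matrix (Fin m) (Fin m) ℝ) : ℝ :=
  1 - ⨅ i1, ⨅ i2, ∑ j, min (A i1 j) (A i2 j)

/-- A square matrix is row-stochastic if its entries are nonnegative and each row sums to 1. -/
def RowStochastic {m : ℕ} (A : Matrix (Fin m) (Fin m) ℝ) : Prop :=
  (∀ i j, 0 ≤ A i j) ∧ ∀ i, ∑ j, A i j = 1

section PosPart

variable {ι R : Type*} [CommRing R] [LinearOrder R] [IsOrderedRing R]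

theorem sum_mul_le_sum_posPart_mul_sub (s : Finset ι) {d v : ι → R} {lo hi : R}
    (hd : ∑ i ∈ s, d i = 0) (hlo : ∀ i ∈ s, lo ≤ v i) (hhi : ∀ i ∈ s, v i ≤ hi) :
    ∑ i ∈ s, d i * v i ≤ (∑ i ∈ s, (d i)⁺) * (hi - lo) :=
  calc ∑ i ∈ s, d i * v i = ∑ i ∈ s, d i * (v i - lo) := by
        simp only [mul_sub, sum_sub_distrib, ← sum_mul, hd, zero_mul, sub_zero]
    _ ≤ ∑ i ∈ s, (d i)⁺ * (v i - lo) :=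
        sum_le_sum fun i hs ↦ mul_le_mul_of_nonneg_right (le_posPart _) (sub_nonneg.2 (hlo i hs))
    _ ≤ ∑ i ∈ s, (d i)⁺ * (hi - lo) :=
        sum_le_sum fun i hs ↦
          mul_le_mul_of_nonneg_left (sub_le_sub_right (hhi i hs) lo) (posPart_nonneg _)
    _ = (∑ i ∈ s, (d i)⁺) * (hi - lo) := by rw [sum_mul]

theorem sum_posPart_sub_eq (s : Finset ι) (a b : ι → R) :
    ∑ i ∈ s, (a i - b i)⁺ = ∑ i ∈ s, a i - ∑ i ∈ s, min (a i) (b i) := by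
  rw [← sum_sub_distrib]
  exact sum_congr rfl fun i _ ↦ by simp [inf_eq_sub_posPart_sub]

end PosPart

section Ergodicity

variable {m : ℕ} {A : Matrix (Fin m) (Fin m) ℝ}

theorem sum_posPart_sub_le_ergLambda (hA : ∀ i, ∑ j, A i j = 1) (i₁ i₂ : Fin m) :
    ∑ j, (A i₁ j - A i₂ j)⁺ ≤ ergLambda A := by
  rw [sum_posPart_sub_eq, hA, ergLambda]
  gcongr
  exact (ciInf_le (Finite.bddBelow_range _) i₁).trans (ciInf_le (Finite.bddBelow_range _) i₂)

theorem sub_le_ergLambda (hA : ∀ i, ∑ j, A i j = 1) (i₁ i₂ j : Fin m) :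
    A i₁ j - A i₂ j ≤ ergLambda A :=
  calc A i₁ j - A i₂ j ≤ (A i₁ j - A i₂ j)⁺ := le_posPart _
    _ ≤ ∑ k, (A i₁ k - A i₂ k)⁺ :=
        single_le_sum (f := fun k ↦ (A i₁ k - A i₂ k)⁺) (fun _ _ ↦ posPart_nonneg _)
          (mem_univ j)
    _ ≤ ergLambda A := sum_posPart_sub_le_ergLambda hA i₁ i₂

theorem ergLambda_nonneg (hA : ∀ i, ∑ j, A i j = 1) : 0 ≤ ergLambda A := by
  rcases isEmpty_or_nonempty (Fin m) with _ | ⟨⟨i⟩⟩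
  · simp [ergLambda]
  · simpa using sub_le_ergLambda hA i i i

theorem ergDelta_le {c : ℝ} (hc : 0 ≤ c) (h : ∀ i₁ i₂ j, A i₁ j - A i₂ j ≤ c) :
    ergDelta A ≤ c :=
  Real.iSup_le (fun j ↦ Real.iSup_le (fun i₁ ↦ Real.iSup_le (fun i₂ ↦
    abs_sub_le_iff.2 ⟨h i₁ i₂ j, h i₂ i₁ j⟩) hc) hc) hc

end Ergodicity

theorem Matrix.mul_apply_sub_mul_apply {m n o α : Type*} [Fintype n] [NonUnitalNonAssocRing α]
    (A : Matrix m n α) (B : Matrix n o α) (i₁ i₂ : m) (j : o) :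
    (A * B) i₁ j - (A * B) i₂ j = ∑ k, (A i₁ k - A i₂ k) * B k j := by
  simp only [mul_apply, sub_mul, sum_sub_distrib]

theorem ergDelta_mul_le_general {m : ℕ} (Q1 Q2 : Matrix (Fin m) (Fin m) ℝ)
    (h1 : RowStochastic Q1) (h2 : RowStochastic Q2) :
    ergDelta (Q1 * Q2) ≤ ergLambda Q1 * ergLambda Q2 := by
  refine ergDelta_le (mul_nonneg (ergLambda_nonneg h1.2) (ergLambda_nonneg h2.2))
    fun i₁ i₂ j ↦ ?_
  have : Nonempty (Fin m) := ⟨j⟩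
  obtain ⟨kmax, hkmax⟩ := Finite.exists_max (Q2 · j)
  obtain ⟨kmin, hkmin⟩ := Finite.exists_min (Q2 · j)
  have hrow : ∑ k, (Q1 i₁ k - Q1 i₂ k) = 0 := by simp only [sum_sub_distrib, h1.2, sub_self]
  rw [mul_apply_sub_mul_apply]
  calc ∑ k, (Q1 i₁ k - Q1 i₂ k) * Q2 k j
      ≤ (∑ k, (Q1 i₁ k - Q1 i₂ k)⁺) * (Q2 kmax j - Q2 kmin j) :=
        sum_mul_le_sum_posPart_mul_sub _ hrow (fun k _ ↦ hkmin k) (fun k _ ↦ hkmax k)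
    _ ≤ ergLambda Q1 * ergLambda Q2 :=
        mul_le_mul (sum_posPart_sub_le_ergLambda h1.2 i₁ i₂) (sub_le_ergLambda h2.2 kmax kmin j)
          (sub_nonneg.2 (hkmin kmax)) (ergLambda_nonneg h1.2)

/-- Hajnal's inequality for two row-stochastic matrices:
`delta (Q1 * Q2) ≤ lambda Q1 * lambda Q2`. -/
theorem ergDelta_mul_le {m : ℕ} (hm : 0 < m) (Q1 Q2 : Matrix (Fin m) (Fin m) ℝ)
    (h1 : RowStochastic Q1) (h2 : RowStochastic Q2) :
    ergDelta (Q1 * Q2) ≤ ergLambda Q1 * ergLambda Q2 :=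
  ergDelta_mul_le_general Q1 Q2 h1 h2
end

section
/- Let Psi = Psi(1,t) be an m-by-m row-stochastic matrix with n <= m, y_1,...,y_n nonnegative reals, and suppose that (a) |Psi_{j,i} - Psi_{k,i}| <= D for all j,k,i, and (b) sum_{j=1}^n Psi_{j,i} >= n * c for some c > 0 and all i. Define z_i = sum_{j=1}^n y_j Psi_{j,i} and w_i = sum_{j=1}^n Psi_{j,i}. Then for every i, |z_i / w_i - (1/n) sum_{k=1}^n y_k| <= (sum_{k=1}^n y_k) * D / (n * c). -/
/-!
With weights `a_j = Psi_{j,i}`, `z = ∑ y_j a_j`, `w = ∑ a_j` and `Y = ∑ y_j`, the numerator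
of `z / w - Y / n` over the common denominator `n w` is `n z - w Y = ∑_j y_j ∑_k (a_j - a_k)`,
a combination of differences of the weights. Each inner sum is at most `n D` in absolute
value, so the deviation is at most `n D Y / (n w) = D Y / w ≤ D Y / (n c)`.
-/

open Finset Matrix

section WeightedAverage

variable {ι : Type*} (s : Finset ι)

theorem card_mul_sum_mul_sub_sum_mul_sum {R : Type*} [CommRing R] (y a : ι → R) :
    (#s : R) * ∑ j ∈ s, y j * a j - (∑ j ∈ s, a j) * ∑ j ∈ s, y j
      = ∑ j ∈ s, y j * ∑ k ∈ s, (a j - a k) := by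
  simp only [Finset.sum_sub_distrib, sum_const, nsmul_eq_mul, mul_sub, Finset.mul_sum,
    Finset.sum_mul]
  congr 1 <;> refine Finset.sum_congr rfl fun j _ => ?_
  · ring
  · exact Finset.sum_congr rfl fun k _ => by ring

variable {s} {y a : ι → ℝ} {D : ℝ}

theorem abs_card_mul_sum_mul_sub_sum_mul_sum_le (hy : ∀ j ∈ s, 0 ≤ y j)
    (hD : ∀ j ∈ s, ∀ k ∈ s, |a j - a k| ≤ D) :
    |(#s : ℝ) * ∑ j ∈ s, y j * a j - (∑ j ∈ s, a j) * ∑ j ∈ s, y j|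
      ≤ #s * D * ∑ j ∈ s, y j := by
  have hrow : ∀ j ∈ s, |∑ k ∈ s, (a j - a k)| ≤ #s * D := fun j hj =>
    (abs_sum_le_sum_abs _ _).trans <| by
      simpa using Finset.sum_le_sum fun k hk => hD j hj k hk
  rw [card_mul_sum_mul_sub_sum_mul_sum, Finset.mul_sum]
  refine (abs_sum_le_sum_abs _ _).trans <| Finset.sum_le_sum fun j hj => ?_
  rw [abs_mul, abs_of_nonneg (hy j hj), mul_comm]
  exact mul_le_mul_of_nonneg_right (hrow j hj) (hy j hj)

theorem abs_sum_mul_div_sum_sub_avg_le (hy : ∀ j ∈ s, 0 ≤ y j)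
    (hD : ∀ j ∈ s, ∀ k ∈ s, |a j - a k| ≤ D) {c : ℝ} (hc : 0 < c)
    (hsum : #s * c ≤ ∑ j ∈ s, a j) :
    |(∑ j ∈ s, y j * a j) / (∑ j ∈ s, a j) - (1 / #s) * ∑ j ∈ s, y j|
      ≤ (∑ j ∈ s, y j) * D / (#s * c) := by
  rcases s.eq_empty_or_nonempty with rfl | hs
  · simp
  have hw : 0 < ∑ j ∈ s, a j := (by positivity : (0 : ℝ) < #s * c).trans_le hsum
  have hY : 0 ≤ ∑ j ∈ s, y j := Finset.sum_nonneg hy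
  have hn : (0 : ℝ) < #s := by exact_mod_cast hs.card_pos
  obtain ⟨j₀, hj₀⟩ := hs
  have hD0 : 0 ≤ D := (abs_nonneg _).trans (hD j₀ hj₀ j₀ hj₀)
  calc |(∑ j ∈ s, y j * a j) / (∑ j ∈ s, a j) - (1 / #s) * ∑ j ∈ s, y j|
      = |(#s : ℝ) * ∑ j ∈ s, y j * a j - (∑ j ∈ s, a j) * ∑ j ∈ s, y j|
          / (#s * ∑ j ∈ s, a j) := by
        rw [← abs_of_pos (by positivity : (0 : ℝ) < #s * ∑ j ∈ s, a j), ← abs_div]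
        congr 1
        field_simp
    _ ≤ #s * D * (∑ j ∈ s, y j) / (#s * ∑ j ∈ s, a j) := by
        gcongr
        exact abs_card_mul_sum_mul_sub_sum_mul_sum_le hy hD
    _ = (∑ j ∈ s, y j) * D / ∑ j ∈ s, a j := by
        field_simp
    _ ≤ (∑ j ∈ s, y j) * D / (#s * c) := by
        gcongr

end WeightedAverage

theorem pushSum_ratio_error_general {n m : ℕ} (hnm : n ≤ m)
    (A : Matrix (Fin m) (Fin m) ℝ)
    (y : Fin n → ℝ) (hy : ∀ k, 0 ≤ y k)
    (D c : ℝ) (hc : 0 < c)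
    (hD : ∀ j k i : Fin m, |A j i - A k i| ≤ D)
    (hcol : ∀ i : Fin m, (n : ℝ) * c ≤ ∑ j : Fin n, A (Fin.castLE hnm j) i) :
    ∀ i : Fin m,
      |(∑ j : Fin n, y j * A (Fin.castLE hnm j) i) / (∑ j : Fin n, A (Fin.castLE hnm j) i)
          - (1 / n) * ∑ k, y k|
        ≤ (∑ k, y k) * D / (n * c) := by
  intro i
  simpa using abs_sum_mul_div_sum_sub_avg_le (s := univ) (a := fun j => A (Fin.castLE hnm j) i)
    (fun k _ => hy k) (fun j _ k _ => hD _ _ i) hc (by simpa using hcol i)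

/-- Abstract consensus-error bound: if the rows of a row-stochastic matrix `Psi` differ
entrywise by at most `D`, and the column sums over the first `n` rows are at least `n * c`,
then the push-sum ratio `z i / w i` deviates from the average of the nonnegative inputs
`y` by at most `(∑ y) * D / (n * c)`. -/
theorem pushSum_ratio_error {n m : ℕ} (hn : 0 < n) (hnm : n ≤ m)
    (A : Matrix (Fin m) (Fin m) ℝ) (hA : RowStochastic A)
    (y : Fin n → ℝ) (hy : ∀ k, 0 ≤ y k)
    (D c : ℝ) (hc : 0 < c)
    (hD : ∀ j k i : Fin m, |A j i - A k i| ≤ D)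
    (hcol : ∀ i : Fin m, (n : ℝ) * c ≤ ∑ j : Fin n, A (Fin.castLE hnm j) i) :
    ∀ i : Fin m,
      |(∑ j : Fin n, y j * A (Fin.castLE hnm j) i) / (∑ j : Fin n, A (Fin.castLE hnm j) i)
          - (1 / n) * ∑ k, y k|
        ≤ (∑ k, y k) * D / (n * c) :=
  pushSum_ratio_error_general hnm A y hy D c hc hD hcol
end

section
/- Under convergent robust push-sum (Algorithm 3), at each agent i in {1,...,n}, for all t >= 1, the norm of z_i[t]/w_i[t] minus (1/n) sum_{k=1}^n y_k is at most (sum_{k=1}^n y_k) / (n * beta^{nB+1}) * gamma^{floor(t/(nB+1))}, where beta = 1 / max_i (d_i^o + 1)^2 and gamma = 1 - beta^{nB+1}. -/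
open Finset Matrix

/-- `Psi M r t = M r * M (r+1) * ... * M t` (the identity matrix when `r > t`). -/
noncomputable def Psi {m : ℕ} (M : ℕ → Matrix (Fin m) (Fin m) ℝ) (r t : ℕ) :
    Matrix (Fin m) (Fin m) ℝ :=
  ((List.range' r (t + 1 - r)).map M).prod

/-! Write `ε = β ^ (n * B + 1)`. By the block hypothesis each product of `n * B + 1`
consecutive matrices has all entries at least `ε`, so by Dobrushin's coefficient of ergodicity
it shrinks the oscillation of every column of a row-stochastic matrix by a factor `1 - ε`.
Hence the columns of `Ψ(1, t) = M[1] ⋯ M[t]` have oscillation at most `(1 - ε) ^ ⌊t/(nB+1)⌋`.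
Since `z[t] = Ψ(1, t)ᵀ z[0]` and `w[t] = Ψ(1, t)ᵀ w[0]`, the ratio `z_i[t] / w_i[t]` is the
average of the `y_k` with weights `p_k = Ψ(1, t)_{k i}`, which are at least `ε` once
`t ≥ nB + 1` and are nearly equal; comparing with the uniform average gives the bound.
For `t < nB + 1` the bound is crude: both averages lie in `[0, ∑ y]`, and `n ε ≤ 1`. -/

namespace RowStochastic

variable {m : ℕ} {A C : Matrix (Fin m) (Fin m) ℝ}

theorem one : RowStochastic (1 : Matrix (Fin m) (Fin m) ℝ) :=
  ⟨fun i j => by by_cases h : i = j <;> simp [one_apply, h], fun i => by simp [one_apply]⟩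

theorem mul (hA : RowStochastic A) (hC : RowStochastic C) : RowStochastic (A * C) := by
  refine ⟨fun i j => by
    rw [mul_apply]
    exact sum_nonneg fun k _ => mul_nonneg (hA.1 i k) (hC.1 k j), fun i => ?_⟩
  simp only [mul_apply]
  rw [sum_comm]
  simp [← mul_sum, hC.2, hA.2 i]

theorem list_prod {l : List (Matrix (Fin m) (Fin m) ℝ)} (h : ∀ A ∈ l, RowStochastic A) :
    RowStochastic l.prod := by
  induction l with
  | nil => exact one
  | cons A l ih =>
    rw [List.forall_mem_cons] at h
    exact h.1.mul (ih h.2)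

theorem apply_le_one (hA : RowStochastic A) (i j : Fin m) : A i j ≤ 1 :=
  (single_le_sum (fun k _ => hA.1 i k) (mem_univ j)).trans_eq (hA.2 i)

theorem card_mul_le_one (hA : RowStochastic A) {ε : ℝ} (hε : ∀ i j, ε ≤ A i j) (i : Fin m) :
    m * ε ≤ 1 := by
  simpa [← hA.2 i] using sum_le_sum fun j (_ : j ∈ univ) => hε i j

theorem le_mul_apply (hA : RowStochastic A) {ε : ℝ} (hC : ∀ i j, ε ≤ C i j) (i j : Fin m) :
    ε ≤ (A * C) i j :=
  calc ε = ∑ k, A i k * ε := by rw [← sum_mul, hA.2 i, one_mul]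
    _ ≤ (A * C) i j := sum_le_sum fun k _ => mul_le_mul_of_nonneg_left (hC k j) (hA.1 i k)

theorem mul_apply_sub_le (hA : RowStochastic A) {j : Fin m} {D : ℝ}
    (hC : ∀ k l, C k j - C l j ≤ D) (i₁ i₂ : Fin m) :
    (A * C) i₁ j - (A * C) i₂ j ≤ (1 - ∑ k, min (A i₁ k) (A i₂ k)) * D := by
  obtain ⟨l, -, hl⟩ := exists_min_image univ (C · j) ⟨i₁, mem_univ _⟩
  set g := fun k => min (A i₁ k) (A i₂ k)
  -- Dobrushin: subtracting the overlap `g` of the two rows and the minimum of the column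
  -- leaves two nonnegative sums
  have hsplit : (A * C) i₁ j - (A * C) i₂ j =
      ∑ k, (A i₁ k - g k) * (C k j - C l j) - ∑ k, (A i₂ k - g k) * (C k j - C l j) := by
    simp only [mul_apply, sub_mul, mul_sub, sum_sub_distrib, ← sum_mul, hA.2]
    ring
  have hfirst : ∑ k, (A i₁ k - g k) * (C k j - C l j) ≤ (1 - ∑ k, g k) * D := by
    rw [← hA.2 i₁, ← sum_sub_distrib, sum_mul]
    exact sum_le_sum fun k _ =>
      mul_le_mul_of_nonneg_left (hC k l) (sub_nonneg.2 (min_le_left _ _))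
  have hsecond : 0 ≤ ∑ k, (A i₂ k - g k) * (C k j - C l j) :=
    sum_nonneg fun k _ =>
      mul_nonneg (sub_nonneg.2 (min_le_right _ _)) (sub_nonneg.2 (hl k (mem_univ k)))
  linarith

theorem abs_mul_apply_sub_le (hA : RowStochastic A) {j : Fin m} {D : ℝ}
    (hC : ∀ k l, |C k j - C l j| ≤ D) (i₁ i₂ : Fin m) :
    |(A * C) i₁ j - (A * C) i₂ j| ≤ (1 - ∑ k, min (A i₁ k) (A i₂ k)) * D := by
  have hC' : ∀ k l, C k j - C l j ≤ D := fun k l => (le_abs_self _).trans (hC k l)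
  rw [abs_sub_le_iff]
  refine ⟨hA.mul_apply_sub_le hC' i₁ i₂, ?_⟩
  simpa only [min_comm] using hA.mul_apply_sub_le hC' i₂ i₁

theorem abs_mul_apply_sub_le_of_le (hA : RowStochastic A) {ε : ℝ} (hε₀ : 0 ≤ ε)
    (hε : ∀ i j, ε ≤ A i j) {j : Fin m} {D : ℝ} (hC : ∀ k l, |C k j - C l j| ≤ D)
    (i₁ i₂ : Fin m) : |(A * C) i₁ j - (A * C) i₂ j| ≤ (1 - ε) * D := by
  have hD : 0 ≤ D := (abs_nonneg _).trans (hC i₁ i₁)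
  have hm : (1 : ℝ) ≤ m := by exact_mod_cast Fin.pos i₁
  have hoverlap : m * ε ≤ ∑ k, min (A i₁ k) (A i₂ k) := by
    simpa using sum_le_sum fun k (_ : k ∈ univ) => le_min (hε i₁ k) (hε i₂ k)
  refine (hA.abs_mul_apply_sub_le hC i₁ i₂).trans (mul_le_mul_of_nonneg_right ?_ hD)
  nlinarith

end RowStochastic

section Psi

variable {m : ℕ} (M : ℕ → Matrix (Fin m) (Fin m) ℝ)

theorem rowStochastic_psi (hM : ∀ τ, RowStochastic (M τ)) (r t : ℕ) :
    RowStochastic (Psi M r t) :=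
  RowStochastic.list_prod fun _ hA => by
    obtain ⟨τ, -, rfl⟩ := List.mem_map.1 hA
    exact hM τ

theorem psi_eq_one_of_lt {r t : ℕ} (h : t < r) : Psi M r t = 1 := by
  simp [Psi, Nat.sub_eq_zero_of_le h]

theorem psi_self (t : ℕ) : Psi M t t = M t := by
  simp [Psi]

theorem psi_split {r s t : ℕ} (hrs : r ≤ s + 1) (hst : s ≤ t) :
    Psi M r t = Psi M r s * Psi M (s + 1) t := by
  have hrange : List.range' r (t + 1 - r) =
      List.range' r (s + 1 - r) ++ List.range' (r + (s + 1 - r)) (t + 1 - (s + 1)) := by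
    rw [List.range'_append_1]
    congr 1
    omega
  rw [Psi, Psi, Psi, hrange, show r + (s + 1 - r) = s + 1 by omega, List.map_append,
    List.prod_append]

theorem psi_succ {r t : ℕ} (h : r ≤ t + 1) : Psi M r (t + 1) = Psi M r t * M (t + 1) := by
  rw [psi_split M h t.le_succ, psi_self]

variable {M}

theorem vecMul_psi {v : ℕ → Fin m → ℝ} (hv : ∀ t, v (t + 1) = v t ᵥ* M (t + 1)) (t : ℕ) :
    v t = v 0 ᵥ* Psi M 1 t := by
  induction t with
  | zero => rw [psi_eq_one_of_lt M zero_lt_one, vecMul_one]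
  | succ t ih => rw [hv, ih, vecMul_vecMul, psi_succ M (Nat.le_add_left 1 t)]

theorem le_psi_apply (hM : ∀ τ, RowStochastic (M τ)) {L : ℕ} {ε : ℝ}
    (hblock : ∀ r : ℕ, ∀ i j : Fin m, ε ≤ Psi M r (r + L) i j) {r t : ℕ} (h : r + L ≤ t)
    (i j : Fin m) : ε ≤ Psi M r t i j := by
  rcases h.eq_or_lt with rfl | h
  · exact hblock r i j
  · have hsplit := hblock (t - (L + 1) + 1)
    rw [show t - (L + 1) + 1 + L = t by omega] at hsplit
    rw [psi_split M (s := t - (L + 1)) (by omega) (by omega)]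
    exact (rowStochastic_psi M hM _ _).le_mul_apply hsplit i j

theorem abs_psi_apply_sub_le_pow (hM : ∀ τ, RowStochastic (M τ)) {L : ℕ} {ε : ℝ}
    (hblock : ∀ r : ℕ, ∀ i j : Fin m, ε ≤ Psi M r (r + L) i j) (hε₀ : 0 ≤ ε) (q : ℕ) {r t : ℕ}
    (h : q * (L + 1) ≤ t + 1 - r) (j i₁ i₂ : Fin m) :
    |Psi M r t i₁ j - Psi M r t i₂ j| ≤ (1 - ε) ^ q := by
  induction q generalizing r i₁ i₂ with
  | zero =>
    have hP := rowStochastic_psi M hM r t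
    rw [pow_zero, abs_sub_le_iff]
    constructor <;> linarith [hP.1 i₁ j, hP.1 i₂ j, hP.apply_le_one i₁ j, hP.apply_le_one i₂ j]
  | succ q ih =>
    rw [add_mul, one_mul] at h
    rw [psi_split M (s := r + L) (by omega) (by omega), pow_succ']
    exact (rowStochastic_psi M hM _ _).abs_mul_apply_sub_le_of_le hε₀ (hblock r)
      (fun k l => ih (r := r + L + 1) (i₁ := k) (i₂ := l) (by omega)) i₁ i₂

end Psi

theorem vecMul_apply_eq_sum_castLE {n m : ℕ} (hnm : n ≤ m) {v : Fin m → ℝ}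
    (hv : ∀ j : Fin m, n ≤ (j : ℕ) → v j = 0) (P : Matrix (Fin m) (Fin m) ℝ) (i : Fin m) :
    (v ᵥ* P) i = ∑ k : Fin n, v (Fin.castLE hnm k) * P (Fin.castLE hnm k) i := by
  refine (Fintype.sum_of_injective _ (Fin.castLE_injective hnm) _ _ ?_ fun _ => rfl).symm
  intro j hj
  rw [hv j (not_lt.1 fun hjn => hj ⟨⟨j, hjn⟩, rfl⟩), zero_mul]

theorem eq_sum_castLE_mul_psi {n m : ℕ} (hnm : n ≤ m) {M : ℕ → Matrix (Fin m) (Fin m) ℝ}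
    {v : ℕ → Fin m → ℝ} (hv : ∀ t i, v (t + 1) i = ∑ j, M (t + 1) j i * v t j)
    (hv₀ : ∀ j : Fin m, n ≤ (j : ℕ) → v 0 j = 0) (t : ℕ) (i : Fin m) :
    v t i = ∑ k : Fin n, v 0 (Fin.castLE hnm k) * Psi M 1 t (Fin.castLE hnm k) i := by
  have hvec : ∀ t, v (t + 1) = v t ᵥ* M (t + 1) := fun t => funext fun i => by
    simp [hv, vecMul, dotProduct, mul_comm]
  rw [vecMul_psi hvec t]
  exact vecMul_apply_eq_sum_castLE hnm hv₀ _ i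

section WeightedAverage

variable {n : ℕ} {p y : Fin n → ℝ}

theorem abs_div_sum_sub_avg_le_sum (hp : ∀ k, 0 ≤ p k) (hy : ∀ k, 0 ≤ y k) :
    |(∑ k, p k * y k) / (∑ k, p k) - (1 / n) * ∑ k, y k| ≤ ∑ k, y k := by
  have hS : 0 ≤ ∑ k, y k := sum_nonneg fun k _ => hy k
  -- also when `∑ k, p k = 0`, where the quotient is the junk value `0`
  have hZ : (∑ k, p k * y k) / (∑ k, p k) ≤ ∑ k, y k := by
    refine div_le_of_le_mul₀ (sum_nonneg fun k _ => hp k) hS ?_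
    rw [mul_sum]
    exact sum_le_sum fun k _ => by
      rw [mul_comm]
      exact mul_le_mul_of_nonneg_right (single_le_sum (fun l _ => hy l) (mem_univ k)) (hp k)
  have hZ₀ : 0 ≤ (∑ k, p k * y k) / (∑ k, p k) :=
    div_nonneg (sum_nonneg fun k _ => mul_nonneg (hp k) (hy k)) (sum_nonneg fun k _ => hp k)
  have havg : (1 / n) * ∑ k, y k ≤ ∑ k, y k := by
    rw [one_div]
    exact mul_le_of_le_one_left hS (Nat.cast_inv_le_one n)
  have havg₀ : 0 ≤ (1 / n) * ∑ k, y k := by positivity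
  rw [abs_sub_le_iff]
  constructor <;> linarith

theorem abs_div_sum_sub_avg_le (hn : 0 < n) {a δ : ℝ} (ha : 0 < a) (hp : ∀ k, a ≤ p k)
    (hy : ∀ k, 0 ≤ y k) (hδ : ∀ k l, |p k - p l| ≤ δ) :
    |(∑ k, p k * y k) / (∑ k, p k) - (1 / n) * ∑ k, y k| ≤ (∑ k, y k) / (n * a) * δ := by
  set W := ∑ k, p k
  set Z := ∑ k, p k * y k
  set S := ∑ k, y k
  have hn' : (0 : ℝ) < n := by exact_mod_cast hn
  have hδ₀ : 0 ≤ δ := (abs_nonneg _).trans (hδ ⟨0, hn⟩ ⟨0, hn⟩)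
  have hS : 0 ≤ S := sum_nonneg fun k _ => hy k
  have hW : n * a ≤ W := by simpa using sum_le_sum fun k (_ : k ∈ univ) => hp k
  have hW₀ : 0 < W := (by positivity : (0 : ℝ) < n * a).trans_le hW
  have hkey : n * Z - S * W = ∑ k, ∑ l, (p k - p l) * y k := by
    simp only [sub_mul, sum_sub_distrib, sum_const, card_univ, Fintype.card_fin, nsmul_eq_mul,
      ← mul_sum, ← sum_mul, Z, S, W]
    ring
  have hnum : |n * Z - S * W| ≤ n * (S * δ) :=
    calc |n * Z - S * W| ≤ ∑ k, ∑ l, |(p k - p l) * y k| := by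
          rw [hkey]
          exact (abs_sum_le_sum_abs _ _).trans (sum_le_sum fun k _ => abs_sum_le_sum_abs _ _)
      _ ≤ ∑ k : Fin n, ∑ l : Fin n, y k * δ := by
          gcongr with k _ l _
          rw [abs_mul, abs_of_nonneg (hy k), mul_comm]
          exact mul_le_mul_of_nonneg_left (hδ k l) (hy k)
      _ = n * (S * δ) := by
          simp only [sum_const, card_univ, Fintype.card_fin, nsmul_eq_mul, ← mul_sum, ← sum_mul,
            S]
  calc |Z / W - 1 / n * S| = |n * Z - S * W| / (n * W) := by
        rw [show Z / W - 1 / n * S = (n * Z - S * W) / (n * W) by field_simp, abs_div,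
          abs_of_pos (mul_pos hn' hW₀)]
    _ ≤ n * (S * δ) / (n * (n * a)) :=
        div_le_div₀ (by positivity) hnum (by positivity) (mul_le_mul_of_nonneg_left hW hn'.le)
    _ = S / (n * a) * δ := by field_simp

end WeightedAverage

/-- Convergence rate of convergent robust push-sum (Theorem 1). The dynamics on the
augmented graph (with `m` total agents, the first `n` of which are real agents with
out-degrees `d i`) are `z[t] = M[t]ᵀ z[t-1]`, `w[t] = M[t]ᵀ w[t-1]`, with the stated
initial conditions; every product of `n*B+1` consecutive matrices has entries at least
`β^(n*B+1)` where `β = 1 / max_i (d_i^o + 1)^2`. Then at each real agent `i` and `t ≥ 1`,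
`|z_i[t]/w_i[t] - (1/n) ∑ y_k| ≤ (∑ y_k) / (n β^(nB+1)) * γ^⌊t/(nB+1)⌋`, `γ = 1 - β^(nB+1)`. -/
theorem robust_pushSum_rate {n m B : ℕ} (hn : 0 < n) (hnm : n ≤ m)
    (d : Fin n → ℕ) (β : ℝ)
    (hβ : β = 1 / ((Finset.univ.sup fun i : Fin n => (d i + 1) ^ 2 : ℕ) : ℝ))
    (M : ℕ → Matrix (Fin m) (Fin m) ℝ) (hM : ∀ τ, RowStochastic (M τ))
    (hblock : ∀ r : ℕ, ∀ i j : Fin m, β ^ (n * B + 1) ≤ Psi M r (r + n * B) i j)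
    (y : Fin n → ℝ) (hy : ∀ k, 0 ≤ y k)
    (z w : ℕ → Fin m → ℝ)
    (hz0 : ∀ i : Fin m, z 0 i = if h : (i : ℕ) < n then y ⟨i, h⟩ else 0)
    (hw0 : ∀ i : Fin m, w 0 i = if (i : ℕ) < n then 1 else 0)
    (hz : ∀ t : ℕ, ∀ i : Fin m, z (t + 1) i = ∑ j, M (t + 1) j i * z t j)
    (hw : ∀ t : ℕ, ∀ i : Fin m, w (t + 1) i = ∑ j, M (t + 1) j i * w t j) :
    ∀ t : ℕ, 1 ≤ t → ∀ i : Fin n,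
      |z t (Fin.castLE hnm i) / w t (Fin.castLE hnm i) - (1 / n) * ∑ k, y k|
        ≤ (∑ k, y k) / (n * β ^ (n * B + 1)) * (1 - β ^ (n * B + 1)) ^ (t / (n * B + 1)) := by
  intro t _ i
  have hβ₀ : 0 < β := by
    have hmax := le_sup (f := fun i : Fin n => (d i + 1) ^ 2) (mem_univ ⟨0, hn⟩)
    rw [hβ]
    exact one_div_pos.2 (Nat.cast_pos.2 ((by positivity : 0 < _).trans_le hmax))
  set ε := β ^ (n * B + 1)
  have hε₀ : 0 < ε := pow_pos hβ₀ _
  have hnε : n * ε ≤ 1 := by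
    have := (rowStochastic_psi M hM 0 (0 + n * B)).card_mul_le_one (hblock 0) ⟨0, hn.trans_le hnm⟩
    nlinarith [show (n : ℝ) ≤ m by exact_mod_cast hnm]
  set p : Fin n → ℝ := fun k => Psi M 1 t (Fin.castLE hnm k) (Fin.castLE hnm i)
  have hzp : z t (Fin.castLE hnm i) = ∑ k, p k * y k := by
    rw [eq_sum_castLE_mul_psi hnm hz (fun j hj => by rw [hz0, dif_neg hj.not_gt]) t]
    simp [hz0, p, mul_comm]
  have hwp : w t (Fin.castLE hnm i) = ∑ k, p k := by
    rw [eq_sum_castLE_mul_psi hnm hw (fun j hj => by rw [hw0, if_neg hj.not_gt]) t]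
    simp [hw0, p]
  rw [hzp, hwp]
  by_cases hlarge : n * B + 1 ≤ t
  · refine abs_div_sum_sub_avg_le hn hε₀ (fun k => le_psi_apply hM hblock (by omega) _ _) hy
      fun k l => abs_psi_apply_sub_le_pow hM hblock hε₀.le _ ?_ _ _ _
    have := Nat.div_mul_le_self t (n * B + 1)
    omega
  · rw [Nat.div_eq_of_lt (not_le.1 hlarge), pow_zero, mul_one]
    exact (abs_div_sum_sub_avg_le_sum (fun k => (rowStochastic_psi M hM 1 t).1 _ _) hy).trans
      (le_div_self (sum_nonneg fun k _ => hy k) (by positivity) hnε)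
end

section
/- Let X be a nonempty convex compact subset of R^d, psi: R^d -> R a 1-strongly convex nonnegative function with minimizer 0, and g[1], g[2], ... vectors in R^d with ||g[t]|| <= L. Define y[t] = argmin_{x in X} ( <sum_{tau=1}^{t-1} g[tau], x> + psi(x)/alpha[t-1] ) with nonincreasing positive step-sizes alpha[t]. Then for any x* in X and T >= 1, sum_{t=1}^T <g[t], y[t] - x*> <= (L^2/2) sum_{t=1}^T alpha[t-1] + psi(x*)/alpha[T]. -/
/-!
The objective `⟪∑_{τ ≤ n} g τ, x⟫ + ψ x / α n` minimized by `y (n + 1)` is `1 / α n`-strongly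
convex, so it grows quadratically away from its constrained minimizer. Passing from step `n` to
step `n + 1` therefore costs at most `α n L² / 2` beyond the linear gain `⟪g (n + 1), y (n + 1)⟫`
(Young's inequality), and the shrinking step sizes only increase `ψ / α` since `ψ ≥ 0`.
Telescoping, and comparing the last minimum with the value at `x*`, gives the regret bound.
-/

open Finset RealInnerProductSpace Filter Topology

section UniformConvex

variable {E : Type*} [NormedAddCommGroup E] [NormedSpace ℝ E] {s t : Set E} {φ : ℝ → ℝ}
  {f : E → ℝ}

lemma UniformConvexOn.subset (hf : UniformConvexOn t φ f) (hst : s ⊆ t) (hs : Convex ℝ s) :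
    UniformConvexOn s φ f :=
  ⟨hs, fun _ hx _ hy _ _ ha hb hab ↦ hf.2 (hst hx) (hst hy) ha hb hab⟩

-- Compare `f y` with `f` on the segment from `y` to `u` and let the step go to `0`.
lemma UniformConvexOn.add_le_of_isMinOn (hf : UniformConvexOn s φ f) {y u : E}
    (hmin : IsMinOn f s y) (hy : y ∈ s) (hu : u ∈ s) : f y + φ ‖u - y‖ ≤ f u := by
  have hsegment : ∀ l ∈ Set.Ioo (0 : ℝ) 1, (1 - l) * φ ‖u - y‖ ≤ f u - f y := by
    rintro l ⟨hl0, hl1⟩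
    have hconv := hf.2 hu hy hl0.le (sub_nonneg.2 hl1.le) (add_sub_cancel l 1)
    have hle := isMinOn_iff.1 hmin _ (hf.1 hu hy hl0.le (sub_nonneg.2 hl1.le) (add_sub_cancel l 1))
    simp only [smul_eq_mul] at hconv
    have : l * ((1 - l) * φ ‖u - y‖) ≤ l * (f u - f y) := by linarith
    exact le_of_mul_le_mul_left this hl0
  have hlim : Tendsto (fun l : ℝ ↦ (1 - l) * φ ‖u - y‖) (𝓝[>] 0) (𝓝 (φ ‖u - y‖)) := by
    have hcont : Continuous fun l : ℝ ↦ (1 - l) * φ ‖u - y‖ := by fun_prop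
    simpa using (hcont.tendsto 0).mono_left nhdsWithin_le_nhds
  linarith [le_of_tendsto hlim (eventually_of_mem (Ioo_mem_nhdsGT zero_lt_one) hsegment)]

end UniformConvex

section InnerProduct

variable {E : Type*} [NormedAddCommGroup E] [InnerProductSpace ℝ E]

lemma StrongConvexOn.inner_add_div {s : Set E} {m : ℝ} {ψ : E → ℝ} (hψ : StrongConvexOn s m ψ)
    (v : E) {a : ℝ} (ha : 0 < a) : StrongConvexOn s (m / a) fun x ↦ ⟪v, x⟫ + ψ x / a := by
  refine ⟨hψ.1, fun x hx y hy b c hb hc hbc ↦ ?_⟩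
  have h := div_le_div_of_nonneg_right (hψ.2 hx hy hb hc hbc) ha.le
  simp only [smul_eq_mul, inner_add_right, real_inner_smul_right] at h ⊢
  have e : (b * ψ x + c * ψ y - b * c * (m / 2 * ‖x - y‖ ^ 2)) / a
      = b * (ψ x / a) + c * (ψ y / a) - b * c * (m / a / 2 * ‖x - y‖ ^ 2) := by
    field_simp
  linarith

lemma real_inner_le_young (x y : E) {a : ℝ} (ha : 0 < a) :
    ⟪x, y⟫ ≤ a / 2 * ‖x‖ ^ 2 + ‖y‖ ^ 2 / (2 * a) :=
  calc ⟪x, y⟫ ≤ ‖x‖ * ‖y‖ := real_inner_le_norm x y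
    _ ≤ a / 2 * ‖x‖ ^ 2 + ‖y‖ ^ 2 / (2 * a) := by
      have e : a / 2 * ‖x‖ ^ 2 + ‖y‖ ^ 2 / (2 * a) - ‖x‖ * ‖y‖ = (a * ‖x‖ - ‖y‖) ^ 2 / (2 * a) := by
        field_simp
        ring
      rw [← sub_nonneg, e]
      positivity

end InnerProduct

lemma sum_Icc_le_of_le_succ {a b c : ℕ → ℝ} (h : ∀ n, a n + b (n + 1) ≤ a (n + 1) + c n)
    (T : ℕ) : ∑ t ∈ Icc 1 T, b t ≤ a T - a 0 + ∑ t ∈ Icc 1 T, c (t - 1) := by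
  induction T with
  | zero => simp
  | succ n ih =>
    rw [sum_Icc_succ_top (Nat.le_add_left 1 n), sum_Icc_succ_top (Nat.le_add_left 1 n),
      Nat.add_sub_cancel]
    linarith [h n]

section DualAveraging

variable {E : Type*} [NormedAddCommGroup E] [InnerProductSpace ℝ E]

/-- The function minimized over `X` by the iterate `y (n + 1)` of dual averaging. -/
noncomputable def dualAveragingObjective (g : ℕ → E) (ψ : E → ℝ) (α : ℕ → ℝ) (n : ℕ) (x : E) : ℝ :=
  ⟪∑ τ ∈ Icc 1 n, g τ, x⟫ + ψ x / α n

variable {g : ℕ → E} {ψ : E → ℝ} {α : ℕ → ℝ} {X : Set E} {L : ℝ}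

lemma dualAveragingObjective_zero (x : E) :
    dualAveragingObjective g ψ α 0 x = ψ x / α 0 := by
  simp [dualAveragingObjective]

lemma dualAveragingObjective_add_inner_le_succ {n : ℕ} {x : E} (hψ : 0 ≤ ψ x)
    (hα : 0 < α (n + 1)) (hαle : α (n + 1) ≤ α n) :
    dualAveragingObjective g ψ α n x + ⟪g (n + 1), x⟫ ≤ dualAveragingObjective g ψ α (n + 1) x := by
  have hdiv : ψ x / α n ≤ ψ x / α (n + 1) := div_le_div_of_nonneg_left hψ hα hαle
  simp only [dualAveragingObjective, sum_Icc_succ_top (Nat.le_add_left 1 n), inner_add_left]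
  linarith

lemma dualAveragingObjective_step (hψ : StrongConvexOn X 1 ψ) {n : ℕ} {y₁ y₂ : E}
    (hmin : IsMinOn (dualAveragingObjective g ψ α n) X y₁) (hy₁ : y₁ ∈ X) (hy₂ : y₂ ∈ X)
    (hψ₂ : 0 ≤ ψ y₂) (hg : ‖g (n + 1)‖ ≤ L) (hα : 0 < α n) (hα' : 0 < α (n + 1))
    (hαle : α (n + 1) ≤ α n) :
    dualAveragingObjective g ψ α n y₁ + ⟪g (n + 1), y₁⟫
      ≤ dualAveragingObjective g ψ α (n + 1) y₂ + L ^ 2 / 2 * α n := by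
  have hgrowth : dualAveragingObjective g ψ α n y₁ + 1 / α n / 2 * ‖y₂ - y₁‖ ^ 2
      ≤ dualAveragingObjective g ψ α n y₂ :=
    (hψ.inner_add_div _ hα).add_le_of_isMinOn hmin hy₁ hy₂
  have hyoung := real_inner_le_young (g (n + 1)) (y₁ - y₂) hα
  rw [inner_sub_right, norm_sub_rev] at hyoung
  have hgL : α n / 2 * ‖g (n + 1)‖ ^ 2 ≤ α n / 2 * L ^ 2 := by
    gcongr
  have e : ‖y₂ - y₁‖ ^ 2 / (2 * α n) = 1 / α n / 2 * ‖y₂ - y₁‖ ^ 2 := by ring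
  linarith [dualAveragingObjective_add_inner_le_succ (g := g) hψ₂ hα' hαle]

theorem dualAveraging_regret_le (hψ : StrongConvexOn X 1 ψ) (hψ0 : ∀ x ∈ X, 0 ≤ ψ x)
    (hg : ∀ t, ‖g t‖ ≤ L) (hα : ∀ t, 0 < α t) (hαanti : Antitone α) {y : ℕ → E}
    (hyX : ∀ n, y (n + 1) ∈ X) (hmin : ∀ n, IsMinOn (dualAveragingObjective g ψ α n) X (y (n + 1)))
    {x : E} (hx : x ∈ X) (T : ℕ) :
    ∑ t ∈ Icc 1 T, ⟪g t, y t - x⟫ ≤ L ^ 2 / 2 * ∑ t ∈ Icc 1 T, α (t - 1) + ψ x / α T := by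
  have htelescope := sum_Icc_le_of_le_succ
    (a := fun n ↦ dualAveragingObjective g ψ α n (y (n + 1))) (b := fun t ↦ ⟪g t, y t⟫)
    (c := fun n ↦ L ^ 2 / 2 * α n)
    (fun n ↦ dualAveragingObjective_step hψ (hmin n) (hyX n) (hyX (n + 1)) (hψ0 _ (hyX (n + 1)))
      (hg _) (hα n) (hα _) (hαanti n.le_succ)) T
  have hfirst : 0 ≤ dualAveragingObjective g ψ α 0 (y 1) := by
    rw [dualAveragingObjective_zero]
    exact div_nonneg (hψ0 _ (hyX 0)) (hα 0).le
  have hlast : dualAveragingObjective g ψ α T (y (T + 1)) ≤ dualAveragingObjective g ψ α T x :=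
    isMinOn_iff.1 (hmin T) x hx
  have hvalue : dualAveragingObjective g ψ α T x = ∑ t ∈ Icc 1 T, ⟪g t, x⟫ + ψ x / α T := by
    simp only [dualAveragingObjective, sum_inner]
  simp only [← mul_sum, zero_add] at htelescope
  simp only [inner_sub_right, sum_sub_distrib]
  linarith

end DualAveraging

theorem dual_averaging_regret_general {dd : ℕ}
    (X : Set (EuclideanSpace ℝ (Fin dd)))
    (hXconv : Convex ℝ X)
    (ψ : EuclideanSpace ℝ (Fin dd) → ℝ)
    (hψsc : StrongConvexOn Set.univ 1 ψ)
    (hψ0 : ∀ x, 0 ≤ ψ x)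
    (L : ℝ) (g : ℕ → EuclideanSpace ℝ (Fin dd)) (hg : ∀ t, ‖g t‖ ≤ L)
    (α : ℕ → ℝ) (hαpos : ∀ t, 0 < α t) (hαmono : ∀ s t : ℕ, s ≤ t → α t ≤ α s)
    (y : ℕ → EuclideanSpace ℝ (Fin dd))
    (hyX : ∀ t : ℕ, 1 ≤ t → y t ∈ X)
    (hymin : ∀ t : ℕ, 1 ≤ t → ∀ u ∈ X,
      ⟪∑ τ ∈ Finset.Icc 1 (t - 1), g τ, y t⟫ + ψ (y t) / α (t - 1)
        ≤ ⟪∑ τ ∈ Finset.Icc 1 (t - 1), g τ, u⟫ + ψ u / α (t - 1))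
    (xstar : EuclideanSpace ℝ (Fin dd)) (hxstar : xstar ∈ X) :
    ∀ T : ℕ, 1 ≤ T →
      ∑ t ∈ Finset.Icc 1 T, ⟪g t, y t - xstar⟫
        ≤ L ^ 2 / 2 * ∑ t ∈ Finset.Icc 1 T, α (t - 1) + ψ xstar / α T := by
  have hmin (n : ℕ) : IsMinOn (dualAveragingObjective g ψ α n) X (y (n + 1)) :=
    isMinOn_iff.2 fun u hu ↦ by simpa [dualAveragingObjective] using hymin (n + 1) n.succ_pos u hu
  exact fun T _ ↦ dualAveraging_regret_le (hψsc.subset (Set.subset_univ X) hXconv)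
    (fun x _ ↦ hψ0 x) hg hαpos (fun s t hst ↦ hαmono s t hst)
    (fun n ↦ hyX (n + 1) n.succ_pos) hmin hxstar T

/-- Regret bound for Nesterov's dual-averaging scheme: with a 1-strongly convex,
nonnegative prox function `ψ` minimized at `0`, iterates
`y t ∈ argmin_{x ∈ X} (⟪∑_{τ<t} g τ, x⟫ + ψ x / α (t-1))`, gradients bounded by `L`,
and nonincreasing positive step-sizes, for every `x* ∈ X` and `T ≥ 1`:
`∑_{t=1}^T ⟪g t, y t - x*⟫ ≤ (L²/2) ∑_{t=1}^T α (t-1) + ψ x* / α T`. -/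
theorem dual_averaging_regret {dd : ℕ}
    (X : Set (EuclideanSpace ℝ (Fin dd)))
    (hXne : X.Nonempty) (hXconv : Convex ℝ X) (hXcomp : IsCompact X)
    (ψ : EuclideanSpace ℝ (Fin dd) → ℝ)
    (hψsc : StrongConvexOn Set.univ 1 ψ)
    (hψ0 : ∀ x, 0 ≤ ψ x) (hψmin : ∀ x, ψ 0 ≤ ψ x)
    (L : ℝ) (g : ℕ → EuclideanSpace ℝ (Fin dd)) (hg : ∀ t, ‖g t‖ ≤ L)
    (α : ℕ → ℝ) (hαpos : ∀ t, 0 < α t) (hαmono : ∀ s t : ℕ, s ≤ t → α t ≤ α s)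
    (y : ℕ → EuclideanSpace ℝ (Fin dd))
    (hyX : ∀ t : ℕ, 1 ≤ t → y t ∈ X)
    (hymin : ∀ t : ℕ, 1 ≤ t → ∀ u ∈ X,
      ⟪∑ τ ∈ Finset.Icc 1 (t - 1), g τ, y t⟫ + ψ (y t) / α (t - 1)
        ≤ ⟪∑ τ ∈ Finset.Icc 1 (t - 1), g τ, u⟫ + ψ u / α (t - 1))
    (xstar : EuclideanSpace ℝ (Fin dd)) (hxstar : xstar ∈ X) :
    ∀ T : ℕ, 1 ≤ T →
      ∑ t ∈ Finset.Icc 1 T, ⟪g t, y t - xstar⟫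
        ≤ L ^ 2 / 2 * ∑ t ∈ Finset.Icc 1 T, α (t - 1) + ψ xstar / α T :=
  dual_averaging_regret_general X hXconv ψ hψsc hψ0 L g hg α hαpos hαmono y hyX hymin xstar hxstar
end
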